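/- (Theorem 2, undirected part of the LWF global Markov property for the induced chain graphs) Suppose μ satisfies the profile global Markov property (U-GMP) with respect to the profile undirected graph L. Then for every nonempty D ⊆ V that is disconnected in the skeleton of L, with skeleton connected components K_1, …, K_r, the random vectors Y_{K_1}, …, Y_{K_r} are mutually conditionally independent given the pair (Y_{V∖D}, X) under μ. -/

import Mathlib

open MeasureTheory ProbabilityTheory

instance cond_isFiniteMeasure {Ω : Type*} [MeasurableSpace Ω] (μ : Measure Ω) (s : Set Ω) :
    IsFiniteMeasure (μ[|s]) := by
  constructor
  unfold ProbabilityTheory.cond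
  simp only [Measure.smul_apply, smul_eq_mul, Measure.restrict_apply_univ]
  exact lt_of_le_of_lt (ENNReal.inv_mul_le_one _) ENNReal.one_lt_top

def restr {Ω : Type*} {V : Type*} {E : V → Type*} (Y : ∀ a, Ω → E a) (S : Set V) :
    Ω → ∀ a : S, E a := fun ω a => Y a ω

lemma measurable_restr {Ω : Type*} [MeasurableSpace Ω] {V : Type*} {E : V → Type*}
    [∀ a, MeasurableSpace (E a)] {Y : ∀ a, Ω → E a} (hY : ∀ a, Measurable (Y a)) (S : Set V) :
    Measurable (restr Y S) :=
  measurable_pi_lambda _ fun a => hY a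

/-- `C` separates `A` from `B` in `G`. -/
def Separates {V : Type*} (G : SimpleGraph V) (A B C : Set V) : Prop :=
  ∀ a ∈ A, ∀ b ∈ B, ∀ p : G.Walk a b, ∃ c ∈ p.support, c ∈ C

/-- Vertex set of a connected component of the subgraph induced on `D`. -/
def componentSet {V : Type*} (G : SimpleGraph V) (D : Set V)
    (c : (G.induce D).ConnectedComponent) : Set V :=
  Subtype.val '' {v : D | (G.induce D).connectedComponentMk v = c}

/-- The graph `U(x)` induced by a profile undirected graph `L`: distinct `a, b` are adjacent
iff `x ∉ L a b`. -/
def inducedGraph {V 𝒳 : Type*} (L : V → V → Set 𝒳) (hL : ∀ a b, L a b = L b a) (x : 𝒳) :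
    SimpleGraph V where
  Adj a b := a ≠ b ∧ x ∉ L a b
  symm := ⟨fun a b ⟨h1, h2⟩ => ⟨h1.symm, by rwa [hL b a]⟩⟩
  loopless := ⟨fun _ h => h.1 rfl⟩

section MarkovProperties

variable {Ω : Type*} [MeasurableSpace Ω] [StandardBorelSpace Ω] [Nonempty Ω]
  {V : Type*} [Fintype V]
  {𝒳 : Type*} [Fintype 𝒳] [Nonempty 𝒳] [MeasurableSpace 𝒳] [MeasurableSingletonClass 𝒳]
  {E : V → Type*} [∀ a, MeasurableSpace (E a)] [∀ a, StandardBorelSpace (E a)]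

/-- Profile undirected Global Markov Property. -/
def UGMP (Y : ∀ a, Ω → E a) (hY : ∀ a, Measurable (Y a)) (X : Ω → 𝒳) (μ : Measure Ω)
    (L : V → V → Set 𝒳) (hL : ∀ a b, L a b = L b a) : Prop :=
  ∀ (x : 𝒳) (A B C : Set V), A.Nonempty → B.Nonempty →
    Disjoint A B → Disjoint A C → Disjoint B C →
    Separates (inducedGraph L hL x) A B C →
    CondIndepFun (MeasurableSpace.comap (restr Y C) MeasurableSpace.pi)
      ((measurable_restr hY C).comap_le) (restr Y A) (restr Y B) (μ[|X ⁻¹' {x}])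

/-- Profile undirected Connected Set Markov Property. -/
def UCSMP (Y : ∀ a, Ω → E a) (hY : ∀ a, Measurable (Y a)) (X : Ω → 𝒳) (μ : Measure Ω)
    (L : V → V → Set 𝒳) (hL : ∀ a b, L a b = L b a) : Prop :=
  ∀ (x : 𝒳) (D : Set V), D.Nonempty → ¬ ((inducedGraph L hL x).induce D).Connected →
    iCondIndepFun (MeasurableSpace.comap (restr Y Dᶜ) MeasurableSpace.pi)
      ((measurable_restr hY Dᶜ).comap_le)
      (m := fun _ => MeasurableSpace.pi)
      (fun c : ((inducedGraph L hL x).induce D).ConnectedComponent =>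
        restr Y (componentSet (inducedGraph L hL x) D c))
      (μ[|X ⁻¹' {x}])

end MarkovProperties

/-- The skeleton of a profile undirected graph `L`: distinct `a, b` are adjacent iff
`L a b ≠ 𝒳`. -/
def skeleton {V 𝒳 : Type*} (L : V → V → Set 𝒳) (hL : ∀ a b, L a b = L b a) :
    SimpleGraph V where
  Adj a b := a ≠ b ∧ L a b ≠ Set.univ
  symm := ⟨fun a b ⟨h1, h2⟩ => ⟨h1.symm, by rwa [hL b a]⟩⟩
  loopless := ⟨fun _ h => h.1 rfl⟩

/-!
Each induced graph `U(x)` is a subgraph of the skeleton, so in `U(x)` the set `V ∖ D` separates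
any skeleton component of `D` from the union of any other components. Under `μ_x` the global
Markov property then makes each component conditionally independent of the others given
`Y_{V∖D}`, and peeling off one component at a time gives mutual conditional independence.
Finally, on the fiber `X = x` the σ-algebra of `(Y_{V∖D}, X)` coincides with that of `Y_{V∖D}`
up to `μ_x`-null sets, so the conditional expectations given `(Y_{V∖D}, X)` under `μ` agree
`μ_x`-a.e. with those given `Y_{V∖D}` under `μ_x`; since `μ` is a finite mixture of the `μ_x`,
the product formula transfers to `μ`.
-/

lemma inducedGraph_le_skeleton {V 𝒳 : Type*} (L : V → V → Set 𝒳) (hL : ∀ a b, L a b = L b a)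
    (x : 𝒳) : inducedGraph L hL x ≤ skeleton L hL :=
  fun _ _ hab => ⟨hab.1, fun h => hab.2 (h ▸ Set.mem_univ x)⟩

section ComponentSet

variable {V : Type*} {G H : SimpleGraph V} {D : Set V}

lemma componentSet_nonempty (c : (G.induce D).ConnectedComponent) :
    (componentSet G D c).Nonempty := by
  obtain ⟨v, rfl⟩ := c.exists_rep
  exact ⟨v, v, rfl, rfl⟩

lemma componentSet_subset (c : (G.induce D).ConnectedComponent) : componentSet G D c ⊆ D := by
  rintro _ ⟨v, _, rfl⟩
  exact v.2

lemma componentSet_disjoint {c c' : (G.induce D).ConnectedComponent} (h : c ≠ c') :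
    Disjoint (componentSet G D c) (componentSet G D c') := by
  rw [Set.disjoint_left]
  rintro _ ⟨v, rfl, rfl⟩ ⟨w, hw, hvw⟩
  exact h (Subtype.ext hvw ▸ hw)

lemma separates_componentSet_biUnion (hGH : G ≤ H) {c : (H.induce D).ConnectedComponent}
    {S : Set (H.induce D).ConnectedComponent} (hc : c ∉ S) :
    Separates G (componentSet H D c) (⋃ c' ∈ S, componentSet H D c') Dᶜ := by
  rintro _ ⟨a, rfl, rfl⟩ _ hb p
  simp only [Set.mem_iUnion] at hb
  obtain ⟨c', hc', b, rfl, rfl⟩ := hb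
  by_contra! hp
  have hpD : ∀ v ∈ (p.mapLe hGH).support, v ∈ D := by simpa using hp
  exact hc (SimpleGraph.ConnectedComponent.sound ((p.mapLe hGH).induce D hpD).reachable ▸ hc')

end ComponentSet

lemma comap_restr_mono {Ω V : Type*} {E : V → Type*} [∀ a, MeasurableSpace (E a)]
    (Y : ∀ a, Ω → E a) {K B : Set V} (h : K ⊆ B) :
    MeasurableSpace.comap (restr Y K) MeasurableSpace.pi
      ≤ MeasurableSpace.comap (restr Y B) MeasurableSpace.pi := by
  have hKB : restr Y K = (fun (g : ∀ a : B, E a) (a : K) => g ⟨a.1, h a.2⟩) ∘ restr Y B := rfl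
  rw [hKB, ← MeasurableSpace.comap_comp]
  exact MeasurableSpace.comap_mono
    (measurable_pi_lambda _ fun a => measurable_pi_apply _).comap_le

section CondIndep

variable {Ω ι : Type*} {m' mΩ : MeasurableSpace Ω} [StandardBorelSpace Ω] {hm' : m' ≤ mΩ}
  {μ : Measure Ω} [IsFiniteMeasure μ]

theorem iCondIndep_of_condIndep_biSup {m : ι → MeasurableSpace Ω} (hm : ∀ i, m i ≤ mΩ)
    (h : ∀ i (S : Finset ι), i ∉ S → S.Nonempty → CondIndep m' (m i) (⨆ j ∈ S, m j) hm' μ) :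
    iCondIndep m' hm' m μ := by
  classical
  rw [iCondIndep_iff _ _ _ hm]
  intro S t ht
  induction S using Finset.induction_on with
  | empty =>
    simp only [Finset.notMem_empty, Set.iInter_of_empty, Set.iInter_univ, Set.indicator_univ,
      Finset.prod_empty]
    exact (condExp_const hm' 1).eventuallyEq
  | @insert i S hi ih =>
    rw [Finset.set_biInter_insert, Finset.prod_insert hi]
    rcases S.eq_empty_or_nonempty with rfl | hS
    · simp
    have hiS := (condIndep_iff _ _ _ hm' (hm i) (iSup₂_le fun j _ => hm j) μ).1 (h i S hi hS)
    have htS : MeasurableSet[⨆ j ∈ S, m j] (⋂ j ∈ S, t j) :=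
      .biInter S.countable_toSet fun j hj =>
        le_iSup₂ (f := fun j (_ : j ∈ S) => m j) j hj _ (ht j (Finset.mem_insert_of_mem hj))
    filter_upwards [hiS _ _ (ht i (Finset.mem_insert_self i S)) htS,
      ih fun j hj => ht j (Finset.mem_insert_of_mem hj)] with ω hω hSω
    rw [hω, Pi.mul_apply, Pi.mul_apply, hSω]

end CondIndep

section CondMeasure

variable {Ω F : Type*} [NormedAddCommGroup F] {m mΩ : MeasurableSpace Ω} {μ : Measure Ω}
  {s : Set Ω} {f : Ω → F}

lemma MeasureTheory.Integrable.cond (hf : Integrable f μ) (s : Set Ω) : Integrable f μ[|s] := by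
  rcases eq_or_ne (μ s) 0 with h0 | h0
  · rw [cond_eq_zero_of_meas_eq_zero h0]
    exact integrable_zero_measure
  · exact hf.restrict.smul_measure (ENNReal.inv_ne_top.2 h0)

variable [NormedSpace ℝ F]

lemma setIntegral_cond (hs : MeasurableSet s) (t : Set Ω) (g : Ω → F) :
    ∫ ω in t, g ω ∂μ[|s] = (μ s)⁻¹.toReal • ∫ ω in t ∩ s, g ω ∂μ := by
  rw [ProbabilityTheory.cond, Measure.restrict_smul, integral_smul_measure,
    Measure.restrict_restrict' hs]

variable [CompleteSpace F] [IsFiniteMeasure μ]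

lemma condExp_ae_eq_condExp_cond (hm : m ≤ mΩ) (hs : MeasurableSet[m] s) (hf : Integrable f μ) :
    μ[f | m] =ᵐ[μ[|s]] μ[|s][f | m] := by
  refine ae_eq_condExp_of_forall_setIntegral_eq hm (hf.cond s)
    (fun t _ _ => (integrable_condExp.cond s).integrableOn) (fun t ht _ => ?_)
    stronglyMeasurable_condExp.aestronglyMeasurable
  rw [setIntegral_cond (hm _ hs), setIntegral_cond (hm _ hs),
    setIntegral_condExp hm hf (ht.inter hs)]

lemma condExp_ae_eq_of_le_of_forall_exists_ae_eq {m₁ m₂ : MeasurableSpace Ω} (h₁₂ : m₁ ≤ m₂)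
    (h₂ : m₂ ≤ mΩ) (h : ∀ t, MeasurableSet[m₂] t → ∃ t', MeasurableSet[m₁] t' ∧ t =ᵐ[μ] t')
    (hf : Integrable f μ) : μ[f | m₂] =ᵐ[μ] μ[f | m₁] := by
  refine (ae_eq_condExp_of_forall_setIntegral_eq h₂ hf
    (fun _ _ _ => integrable_condExp.integrableOn) (fun t ht _ => ?_)
    (stronglyMeasurable_condExp.mono h₁₂).aestronglyMeasurable).symm
  obtain ⟨t', ht', htt'⟩ := h t ht
  rw [setIntegral_congr_set htt', setIntegral_condExp (h₁₂.trans h₂) hf ht',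
    setIntegral_congr_set htt']

variable {γ 𝒳 : Type*} [MeasurableSpace γ] [MeasurableSpace 𝒳] [MeasurableSingletonClass 𝒳]
  {Z : Ω → γ} {X : Ω → 𝒳}

lemma ae_of_forall_ae_cond_fiber [Fintype 𝒳] (hX : Measurable X) {p : Ω → Prop}
    (h : ∀ x, ∀ᵐ ω ∂μ[|X ⁻¹' {x}], p ω) : ∀ᵐ ω ∂μ, p ω := by
  rw [← sum_meas_smul_cond_fiber hX μ, ae_finsetSum_measure_iff]
  exact fun x _ => Measure.ae_smul_measure (h x) _

lemma condExp_comap_prodMk_ae_eq_cond (hZ : Measurable Z) (hX : Measurable X)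
    (hf : Integrable f μ) (x : 𝒳) :
    μ[f | MeasurableSpace.comap (fun ω => (Z ω, X ω)) inferInstance]
      =ᵐ[μ[|X ⁻¹' {x}]] μ[|X ⁻¹' {x}][f | MeasurableSpace.comap Z inferInstance] := by
  have hZle : MeasurableSpace.comap Z inferInstance
      ≤ MeasurableSpace.comap (fun ω => (Z ω, X ω)) inferInstance :=
    (measurable_fst.comp (comap_measurable (fun ω => (Z ω, X ω)))).comap_le
  have hfiber : MeasurableSet[MeasurableSpace.comap (fun ω => (Z ω, X ω)) inferInstance]
      (X ⁻¹' {x}) :=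
    ⟨Set.univ ×ˢ {x}, MeasurableSet.univ.prod (measurableSet_singleton x), by ext; simp⟩
  refine (condExp_ae_eq_condExp_cond (hZ.prodMk hX).comap_le hfiber hf).trans
    (condExp_ae_eq_of_le_of_forall_exists_ae_eq hZle (hZ.prodMk hX).comap_le ?_ (hf.cond _))
  rintro _ ⟨T, hT, rfl⟩
  refine ⟨Z ⁻¹' ((fun z => (z, x)) ⁻¹' T), ⟨_, measurable_prodMk_right hT, rfl⟩, ?_⟩
  filter_upwards [ae_cond_mem (hX (measurableSet_singleton x))] with ω hω
  rw [Set.mem_preimage, Set.mem_singleton_iff] at hω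
  change ((Z ω, X ω) ∈ T) = ((Z ω, x) ∈ T)
  rw [hω]

theorem iCondIndepFun_comap_prodMk_of_forall_cond [StandardBorelSpace Ω] [Fintype 𝒳]
    {ι : Type*} {β : ι → Type*} {mβ : ∀ i, MeasurableSpace (β i)} {g : ∀ i, Ω → β i}
    (hg : ∀ i, Measurable (g i)) (hZ : Measurable Z) (hX : Measurable X)
    (h : ∀ x,
      iCondIndepFun (MeasurableSpace.comap Z inferInstance) hZ.comap_le g μ[|X ⁻¹' {x}]) :
    iCondIndepFun (MeasurableSpace.comap (fun ω => (Z ω, X ω)) inferInstance)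
      (hZ.prodMk hX).comap_le g μ := by
  rw [iCondIndepFun_iff_condExp_inter_preimage_eq_mul _ _ hg]
  intro S sets hsets
  refine ae_of_forall_ae_cond_fiber hX fun x => ?_
  have hcond : ∀ A, MeasurableSet A →
      μ⟦A | MeasurableSpace.comap (fun ω => (Z ω, X ω)) inferInstance⟧
        =ᵐ[μ[|X ⁻¹' {x}]] μ[|X ⁻¹' {x}]⟦A | MeasurableSpace.comap Z inferInstance⟧ :=
    fun A hA => condExp_comap_prodMk_ae_eq_cond hZ hX ((integrable_const 1).indicator hA) x
  have hx := (iCondIndepFun_iff_condExp_inter_preimage_eq_mul _ _ hg).1 (h x) S hsets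
  refine (hcond _ ?_).trans (hx.trans (eventuallyEq_prod fun i hi => (hcond _ ?_).symm))
  · exact .biInter S.countable_toSet fun i hi => hg i (hsets i hi)
  · exact hg i (hsets i hi)

end CondMeasure

theorem iCondIndepFun_componentSet_skeleton_of_UGMP {Ω : Type*} [MeasurableSpace Ω]
    [StandardBorelSpace Ω] {V 𝒳 : Type*} {E : V → Type*} [∀ a, MeasurableSpace (E a)]
    {Y : ∀ a, Ω → E a} {hY : ∀ a, Measurable (Y a)} {X : Ω → 𝒳} {μ : Measure Ω}
    {L : V → V → Set 𝒳} {hL : ∀ a b, L a b = L b a} (h : UGMP Y hY X μ L hL) (x : 𝒳) (D : Set V) :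
    iCondIndepFun (MeasurableSpace.comap (restr Y Dᶜ) MeasurableSpace.pi)
      ((measurable_restr hY Dᶜ).comap_le)
      (m := fun _ => MeasurableSpace.pi)
      (fun c : ((skeleton L hL).induce D).ConnectedComponent =>
        restr Y (componentSet (skeleton L hL) D c))
      (μ[|X ⁻¹' {x}]) := by
  rw [iCondIndepFun_iff_iCondIndep]
  refine iCondIndep_of_condIndep_biSup (fun c => (measurable_restr hY _).comap_le)
    fun c S hc hS => ?_
  set K := componentSet (skeleton L hL) D
  have hKS : ∀ c' ∈ S, K c' ⊆ ⋃ c'' ∈ (S : Set _), K c'' := fun c' hc' =>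
    Set.subset_biUnion_of_mem (u := K) (Finset.mem_coe.2 hc')
  have hdisj : Disjoint (K c) (⋃ c' ∈ (S : Set _), K c') :=
    Set.disjoint_iUnion₂_right.2 fun c' hc' =>
      componentSet_disjoint (ne_of_mem_of_not_mem hc' hc).symm
  obtain ⟨c₀, hc₀⟩ := hS
  have hCI := h x (K c) _ Dᶜ (componentSet_nonempty c)
    ((componentSet_nonempty c₀).mono (hKS c₀ hc₀)) hdisj
    (Set.disjoint_compl_right_iff_subset.2 (componentSet_subset c))
    (Set.disjoint_compl_right_iff_subset.2 (Set.iUnion₂_subset fun c' _ => componentSet_subset _))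
    (separates_componentSet_biUnion (inducedGraph_le_skeleton L hL x) (Finset.mem_coe.not.2 hc))
  rw [condIndepFun_iff_condIndep] at hCI
  exact condIndep_of_condIndep_of_le_right hCI
    (iSup₂_le fun c' hc' => comap_restr_mono Y (hKS c' hc'))

theorem UGMP_implies_LWF_undirected_general
    {Ω : Type*} [MeasurableSpace Ω] [StandardBorelSpace Ω]
    {V : Type*}
    {𝒳 : Type*} [Fintype 𝒳] [MeasurableSpace 𝒳] [MeasurableSingletonClass 𝒳]
    {E : V → Type*} [∀ a, MeasurableSpace (E a)]
    (Y : ∀ a, Ω → E a) (hY : ∀ a, Measurable (Y a))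
    (X : Ω → 𝒳) (hX : Measurable X)
    (μ : Measure Ω) [IsProbabilityMeasure μ]
    (L : V → V → Set 𝒳) (hL : ∀ a b, L a b = L b a)
    (h : UGMP Y hY X μ L hL) :
    ∀ D : Set V, D.Nonempty → ¬ ((skeleton L hL).induce D).Connected →
      iCondIndepFun
        (MeasurableSpace.comap (fun ω => (restr Y Dᶜ ω, X ω)) inferInstance)
        (((measurable_restr hY Dᶜ).prodMk hX).comap_le)
        (m := fun _ => MeasurableSpace.pi)
        (fun c : ((skeleton L hL).induce D).ConnectedComponent =>
          restr Y (componentSet (skeleton L hL) D c))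
        μ := fun D _ _ =>
  iCondIndepFun_comap_prodMk_of_forall_cond (fun _ => measurable_restr hY _)
    (measurable_restr hY Dᶜ) hX fun x => iCondIndepFun_componentSet_skeleton_of_UGMP h x D

/-- **Theorem 2, undirected part of the LWF global Markov property.**
If `μ` satisfies the profile global Markov property with respect to `L`, then for every
nonempty `D ⊆ V` that is disconnected in the skeleton of `L`, the random vectors indexed by
the connected components of `D` in the skeleton are mutually conditionally independent given
the pair `(Y_{V∖D}, X)` under `μ`. -/
theorem UGMP_implies_LWF_undirected
    {Ω : Type*} [MeasurableSpace Ω] [StandardBorelSpace Ω] [Nonempty Ω]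
    {V : Type*} [Fintype V]
    {𝒳 : Type*} [Fintype 𝒳] [Nonempty 𝒳] [MeasurableSpace 𝒳] [MeasurableSingletonClass 𝒳]
    {E : V → Type*} [∀ a, MeasurableSpace (E a)] [∀ a, StandardBorelSpace (E a)]
    (Y : ∀ a, Ω → E a) (hY : ∀ a, Measurable (Y a))
    (X : Ω → 𝒳) (hX : Measurable X)
    (μ : Measure Ω) [IsProbabilityMeasure μ] (hXpos : ∀ x : 𝒳, μ (X ⁻¹' {x}) ≠ 0)
    (L : V → V → Set 𝒳) (hL : ∀ a b, L a b = L b a)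
    (h : UGMP Y hY X μ L hL) :
    ∀ D : Set V, D.Nonempty → ¬ ((skeleton L hL).induce D).Connected →
      iCondIndepFun
        (MeasurableSpace.comap (fun ω => (restr Y Dᶜ ω, X ω)) inferInstance)
        (((measurable_restr hY Dᶜ).prodMk hX).comap_le)
        (m := fun _ => MeasurableSpace.pi)
        (fun c : ((skeleton L hL).induce D).ConnectedComponent =>
          restr Y (componentSet (skeleton L hL) D c))
        μ :=
  UGMP_implies_LWF_undirected_general Y hY X hX μ L hL h
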